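/- Let G be a simple connected graph on n vertices, and let S ⊆ V be nonempty with V∖S nonempty. If the subgraph of G induced by V∖S is connected, then 1/(−λ(Q[V∖S])) ≤ τ_rel · n/|S|, i.e., −λ(Q[V∖S]) ≥ |S|/(n · τ_rel). -/

import Mathlib

open MeasureTheory ProbabilityTheory Finset
open scoped ENNReal NNReal

namespace PP

variable {V : Type*}

/-- The number of edges of a graph. -/
noncomputable def numEdges (G : SimpleGraph V) : ℕ := Nat.card G.edgeSet

/-- The transition matrix of the (lazy) population random walk. -/
noncomputable def popMat [Fintype V] [DecidableEq V] (G : SimpleGraph V) [DecidableRel G.Adj] :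
    Matrix V V ℝ :=
  Matrix.of fun u v =>
    if u = v then 1 - (G.degree u : ℝ) / (2 * numEdges G)
    else if G.Adj u v then 1 / (2 * numEdges G) else 0

/-- The second largest eigenvalue of the population random walk matrix, via the
Rayleigh quotient over vectors orthogonal to the constant vector. -/
noncomputable def lambdaTwo [Fintype V] [DecidableEq V] (G : SimpleGraph V)
    [DecidableRel G.Adj] : ℝ :=
  sSup {r : ℝ | ∃ x : V → ℝ, x ≠ 0 ∧ (∑ v, x v) = 0 ∧
    r = (∑ u, ∑ v, x u * popMat G u v * x v) / (∑ v, (x v) ^ 2)}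

/-- The relaxation time of the population random walk. -/
noncomputable def tauRel [Fintype V] [DecidableEq V] (G : SimpleGraph V)
    [DecidableRel G.Adj] : ℝ :=
  1 / (1 - lambdaTwo G)

/-- The edge expansion of a graph. -/
noncomputable def edgeExpansion [Fintype V] [DecidableEq V] (G : SimpleGraph V) [DecidableRel G.Adj] : ℝ :=
  sInf {r : ℝ | ∃ S : Finset V, S.Nonempty ∧ 2 * S.card ≤ Fintype.card V ∧
    r = ((Finset.univ.filter fun p : V × V => p.1 ∈ S ∧ p.2 ∉ S ∧ G.Adj p.1 p.2).card : ℝ) /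
        (S.card : ℝ)}

/-- The scheduler `e` is an i.i.d. sequence, each step being an ordered pair of adjacent
nodes chosen uniformly at random among the `2m` ordered pairs of adjacent nodes. -/
def IsUniformSched [Fintype V] (G : SimpleGraph V) {Ω : Type*} [MeasurableSpace Ω]
    (μ : Measure Ω) (e : ℕ → Ω → V × V) : Prop :=
  iIndepFun (m := fun _ : ℕ => (⊤ : MeasurableSpace (V × V))) e μ ∧
    (∀ t : ℕ, ∀ p : V × V, G.Adj p.1 p.2 →
      μ {ω | e t ω = p} = ENNReal.ofReal (1 / (2 * (numEdges G : ℝ)))) ∧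
    (∀ t : ℕ, ∀ p : V × V, ¬ G.Adj p.1 p.2 → μ {ω | e t ω = p} = 0)

/-- A population protocol with state set `Λ`. -/
structure Protocol (Λ : Type*) where
  trans : Λ × Λ → Λ × Λ
  input : Bool → Λ
  output : Λ → Bool

variable {Λ : Type*}

/-- One interaction at an ordered pair `p`: the states of the two nodes are updated
by the transition function, all other nodes are unchanged. -/
def applyStep [DecidableEq V] (Ξ : Λ × Λ → Λ × Λ) (x : V → Λ) (p : V × V) : V → Λ :=
  fun w =>
    if w = p.1 then (Ξ (x p.1, x p.2)).1
    else if w = p.2 then (Ξ (x p.1, x p.2)).2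
    else x w

/-- The execution of a protocol from initial configuration `x0` under schedule `σ`. -/
def exec [DecidableEq V] (Ξ : Λ × Λ → Λ × Λ) (x0 : V → Λ) (σ : ℕ → V × V) : ℕ → V → Λ
  | 0 => x0
  | t + 1 => applyStep Ξ (exec Ξ x0 σ t) (σ t)

/-- A configuration is stable if every configuration reachable from it (by finitely many
interactions along edges of `G`) has the same output at every node. -/
def IsStable [DecidableEq V] (G : SimpleGraph V) (Ξ : Λ × Λ → Λ × Λ) (out : Λ → Bool)
    (x : V → Λ) : Prop :=
  ∀ y, Relation.ReflTransGen
      (fun a b => ∃ p : V × V, G.Adj p.1 p.2 ∧ b = applyStep Ξ a p) x y →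
    ∀ v, out (y v) = out (x v)

/-- The stabilization time of an execution (`∞` if it never stabilizes). -/
noncomputable def stabTime [DecidableEq V] (G : SimpleGraph V) (Ξ : Λ × Λ → Λ × Λ)
    (out : Λ → Bool) (x0 : V → Λ) (σ : ℕ → V × V) : ℝ≥0∞ :=
  sInf {c : ℝ≥0∞ | ∃ t : ℕ, c = (t : ℝ≥0∞) ∧ IsStable G Ξ out (exec Ξ x0 σ t)}

/-- The number of nodes with input value `b`. -/
def cnt [Fintype V] (f : V → Bool) (b : Bool) : ℕ :=
  (Finset.univ.filter fun v => f v = b).card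

/-- The (normalized) bias of an input. -/
noncomputable def bias [Fintype V] (f : V → Bool) : ℝ :=
  |(cnt f false : ℝ) - (cnt f true : ℝ)| / (Fintype.card V : ℝ)

/-- The majority input value. -/
def majOf [Fintype V] (f : V → Bool) : Bool :=
  decide (cnt f false < cnt f true)

/-- The initial configuration determined by an input. -/
def initConfig (P : Protocol Λ) (f : V → Bool) : V → Λ := fun v => P.input (f v)

/-- A protocol solves exact majority (w.r.t. a given scheduler) if on every input with
positive bias it almost surely reaches a stable configuration in which every node
outputs the majority input value. -/
def SolvesMajority [Fintype V] [DecidableEq V] (G : SimpleGraph V) (P : Protocol Λ)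
    {Ω : Type*} [MeasurableSpace Ω] (μ : Measure Ω) (e : ℕ → Ω → V × V) : Prop :=
  ∀ f : V → Bool, 0 < bias f →
    μ {ω | ∃ t : ℕ,
        IsStable G P.trans P.output (exec P.trans (initConfig P f) (fun s => e s ω) t) ∧
        ∀ v, P.output (exec P.trans (initConfig P f) (fun s => e s ω) t v) = majOf f} = 1

/-- The expected stabilization time on input `f`. -/
noncomputable def expStab [Fintype V] [DecidableEq V] (G : SimpleGraph V) (P : Protocol Λ)
    {Ω : Type*} [MeasurableSpace Ω] (μ : Measure Ω) (e : ℕ → Ω → V × V) (f : V → Bool) :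
    ℝ≥0∞ :=
  ∫⁻ ω, stabTime G P.trans P.output (initConfig P f) (fun s => e s ω) ∂μ

/-- States of the two-species annihilation dynamics. -/
inductive ABC : Type
  | A | B | C
deriving DecidableEq

/-- The annihilation rule: `A` and `B` annihilate into `C`; otherwise states are swapped. -/
def annRule : ABC × ABC → ABC × ABC
  | (ABC.A, ABC.B) => (ABC.C, ABC.C)
  | (ABC.B, ABC.A) => (ABC.C, ABC.C)
  | (x, y) => (y, x)

/-- The number of nodes in a given annihilation state. -/
def cntABC [Fintype V] (x : V → ABC) (a : ABC) : ℕ :=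
  (Finset.univ.filter fun v => x v = a).card

/-- The bias of an annihilation configuration. -/
noncomputable def annBias [Fintype V] (x : V → ABC) : ℝ :=
  ((cntABC x ABC.A : ℝ) - (cntABC x ABC.B : ℝ)) / (Fintype.card V : ℝ)

/-- The extinction time of the annihilation dynamics: the first time at which
no node is in state `B`. -/
noncomputable def extTime [Fintype V] [DecidableEq V] (x0 : V → ABC) (σ : ℕ → V × V) :
    ℝ≥0∞ :=
  sInf {c : ℝ≥0∞ | ∃ t : ℕ, c = (t : ℝ≥0∞) ∧ ∀ v, exec annRule x0 σ t v ≠ ABC.B}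

/-- The `ε`-clearing time of the annihilation dynamics. -/
noncomputable def clrTime [Fintype V] [DecidableEq V] (ε : ℝ) (x0 : V → ABC)
    (σ : ℕ → V × V) : ℝ≥0∞ :=
  sInf {c : ℝ≥0∞ | ∃ t : ℕ, c = (t : ℝ≥0∞) ∧
    ((∀ v, exec annRule x0 σ t v ≠ ABC.B) ∨
      (1 - ε) * (Fintype.card V : ℝ) ≤ (cntABC (exec annRule x0 σ t) ABC.C : ℝ))}

/-- The `±1/0` encoding of annihilation states. -/
def zOf : ABC → ℤ
  | ABC.A => 1
  | ABC.B => -1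
  | ABC.C => 0

/-- The influencer sets of the broadcast process. -/
def influencers [DecidableEq V] (σ : ℕ → V × V) : ℕ → V → Set V
  | 0, v => {v}
  | t + 1, v =>
    if v = (σ t).1 then influencers σ t v ∪ influencers σ t (σ t).2
    else if v = (σ t).2 then influencers σ t v ∪ influencers σ t (σ t).1
    else influencers σ t v

/-- The first time `v` is influenced by `u`. -/
noncomputable def hearTime [DecidableEq V] (σ : ℕ → V × V) (u v : V) : ℝ≥0∞ :=
  sInf {c : ℝ≥0∞ | ∃ t : ℕ, c = (t : ℝ≥0∞) ∧ u ∈ influencers σ t v}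

/-- The broadcast time from a node `u`. -/
noncomputable def bcastTime [Fintype V] [DecidableEq V] (σ : ℕ → V × V) (u : V) : ℝ≥0∞ :=
  ⨆ v, hearTime σ u v

/-- The broadcast time from a set `A` of nodes. -/
noncomputable def bcastTimeSet [Fintype V] [DecidableEq V] (σ : ℕ → V × V) (A : Set V) :
    ℝ≥0∞ :=
  ⨆ v, ⨅ u ∈ A, hearTime σ u v

/-- `Y` is a geometric random variable with parameter `p`, taking values in `{1,2,…}`. -/
def IsGeom {Ω : Type*} [MeasurableSpace Ω] (μ : Measure Ω) (Y : Ω → ℕ) (p : ℝ) : Prop :=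
  μ {ω | Y ω = 0} = 0 ∧
    ∀ k : ℕ, μ {ω | Y ω = k + 1} = ENNReal.ofReal ((1 - p) ^ k * p)

/-- The generator `Q = P − I` of the population random walk. -/
noncomputable def popQ [Fintype V] [DecidableEq V] (G : SimpleGraph V) [DecidableRel G.Adj] :
    Matrix V V ℝ :=
  popMat G - 1

/-- The principal submatrix of `Q` on a set `U` of vertices. -/
noncomputable def subQ [Fintype V] [DecidableEq V] (G : SimpleGraph V) [DecidableRel G.Adj]
    (U : Finset V) : Matrix {v // v ∈ U} {v // v ∈ U} ℝ :=
  (popQ G).submatrix (fun i => (i : V)) (fun i => (i : V))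

/-- The largest eigenvalue of a symmetric matrix, via the Rayleigh quotient. -/
noncomputable def maxEig {ι : Type*} [Fintype ι] (M : Matrix ι ι ℝ) : ℝ :=
  sSup {r : ℝ | ∃ x : ι → ℝ, x ≠ 0 ∧ r = (∑ i, ∑ j, x i * M i j * x j) / (∑ i, (x i) ^ 2)}

/-- The matrix `R_S`. -/
noncomputable def RS [Fintype V] [DecidableEq V] (G : SimpleGraph V) [DecidableRel G.Adj]
    (S : Finset V) : Matrix V V ℝ :=
  Matrix.of fun u v =>
    if u ∈ S then (if u = v then maxEig (subQ G Sᶜ) else 0)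
    else if v ∈ S then 0
    else popQ G u v

end PP




namespace Stmt11Aux

open PP Finset

variable {V : Type} [Fintype V] [DecidableEq V] (G : SimpleGraph V) [DecidableRel G.Adj]

noncomputable def qf (x : V → ℝ) : ℝ := ∑ u, ∑ v, x u * popQ G u v * x v

noncomputable def pf (x : V → ℝ) : ℝ := ∑ u, ∑ v, x u * popMat G u v * x v

noncomputable def Df (x : V → ℝ) : ℝ := ∑ u, ∑ v, if G.Adj u v then (x u - x v) ^ 2 else 0

noncomputable def Sq (x : V → ℝ) : ℝ := ∑ v, (x v) ^ 2

lemma Sq_nonneg (x : V → ℝ) : 0 ≤ Sq x :=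
  Finset.sum_nonneg fun _ _ => sq_nonneg _

lemma Sq_pos {x : V → ℝ} (hx : x ≠ 0) : 0 < Sq x := by
  obtain ⟨v, hv⟩ := Function.ne_iff.mp hx
  exact Finset.sum_pos' (fun _ _ => sq_nonneg _)
    ⟨v, Finset.mem_univ v, by nlinarith [sq_abs (x v), abs_pos.mpr hv]⟩

lemma degree_cast (u : V) :
    (G.degree u : ℝ) = ∑ v, if G.Adj u v then (1 : ℝ) else 0 := by
  simp [SimpleGraph.degree, SimpleGraph.neighborFinset_eq_filter, Finset.sum_boole]

lemma popQ_apply (u v : V) : popQ G u v =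
    (if G.Adj u v then 1 / (2 * (numEdges G : ℝ)) else 0)
      - (if u = v then (G.degree u : ℝ) / (2 * (numEdges G : ℝ)) else 0) := by
  simp only [popQ, popMat, Matrix.sub_apply, Matrix.one_apply, Matrix.of_apply]
  by_cases h : u = v
  · subst h; simp [G.irrefl]
  · simp [h]

lemma qf_eq (x : V → ℝ) : qf G x = -Df G x / (4 * (numEdges G : ℝ)) := by
  set m : ℝ := (numEdges G : ℝ) with hm
  have key : qf G x
      = (∑ u, ∑ v, if G.Adj u v then x u * x v else 0) / (2 * m)
        - (∑ u, ∑ v, if G.Adj u v then x u ^ 2 else 0) / (2 * m) := by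
    rw [qf]
    have h1 : ∀ u v : V, x u * popQ G u v * x v
        = (if G.Adj u v then x u * x v else 0) / (2 * m)
          - (if u = v then (G.degree u : ℝ) * (x u * x v) else 0) / (2 * m) := by
      intro u v
      rw [popQ_apply]
      split_ifs <;> ring
    simp only [h1]
    rw [Finset.sum_congr rfl (fun u _ => Finset.sum_sub_distrib _ _),
      Finset.sum_sub_distrib]
    congr 1
    · rw [Finset.sum_div]
      exact Finset.sum_congr rfl fun u _ => (Finset.sum_div _ _ _).symm
    · rw [Finset.sum_div]
      refine Finset.sum_congr rfl fun u _ => ?_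
      rw [← Finset.sum_div, Finset.sum_ite_eq, if_pos (Finset.mem_univ u)]
      have : (G.degree u : ℝ) * (x u * x u) = ∑ v, if G.Adj u v then x u ^ 2 else 0 := by
        rw [degree_cast, Finset.sum_mul]
        exact Finset.sum_congr rfl fun v _ => by split_ifs <;> ring
      rw [this, Finset.sum_div]
  have hsymm : (∑ u, ∑ v, if G.Adj u v then (x v) ^ 2 else 0)
      = ∑ u, ∑ v, if G.Adj u v then (x u) ^ 2 else 0 := by
    rw [Finset.sum_comm]
    exact Finset.sum_congr rfl fun u _ => Finset.sum_congr rfl fun v _ =>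
      if_congr (G.adj_comm v u) rfl rfl
  have hDf : Df G x = 2 * (∑ u, ∑ v, if G.Adj u v then x u ^ 2 else 0)
      - 2 * (∑ u, ∑ v, if G.Adj u v then x u * x v else 0) := by
    have : Df G x = ∑ u, ∑ v, ((if G.Adj u v then x u ^ 2 else 0)
        + (if G.Adj u v then x v ^ 2 else 0)
        - 2 * (if G.Adj u v then x u * x v else 0)) := by
      rw [Df]
      exact Finset.sum_congr rfl fun u _ => Finset.sum_congr rfl fun v _ => by
        split_ifs <;> ring
    rw [this]
    simp only [Finset.sum_sub_distrib, Finset.sum_add_distrib, ← Finset.mul_sum]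
    rw [hsymm]; ring
  rw [key, hDf]; ring

lemma Df_nonneg (x : V → ℝ) : 0 ≤ Df G x :=
  Finset.sum_nonneg fun _ _ => Finset.sum_nonneg fun _ _ => by positivity

lemma qf_nonpos (x : V → ℝ) : qf G x ≤ 0 := by
  rw [qf_eq]
  apply div_nonpos_of_nonpos_of_nonneg
  · linarith [Df_nonneg G x]
  · positivity

lemma pf_eq (x : V → ℝ) : pf G x = Sq x + qf G x := by
  have h1 : ∀ u v : V, x u * popMat G u v * x v
      = x u * popQ G u v * x v + (if u = v then x u * x v else 0) := by
    intro u v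
    have : popMat G u v = popQ G u v + (if u = v then 1 else 0) := by
      simp [popQ, Matrix.sub_apply, Matrix.one_apply]
    rw [this]; split_ifs <;> ring
  rw [pf]
  simp only [h1]
  rw [Finset.sum_congr rfl (fun u _ => Finset.sum_add_distrib), Finset.sum_add_distrib]
  rw [qf, Sq]
  have : ∀ u : V, (∑ v, if u = v then x u * x v else 0) = (x u) ^ 2 := by
    intro u
    rw [Finset.sum_ite_eq, if_pos (Finset.mem_univ u)]; ring
  rw [Finset.sum_congr rfl fun u _ => this u]
  ring

lemma qf_sub_const (x : V → ℝ) (c : ℝ) : qf G (fun v => x v - c) = qf G x := by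
  rw [qf_eq, qf_eq]
  congr 2
  exact Finset.sum_congr rfl fun u _ => Finset.sum_congr rfl fun v _ => by
    split_ifs <;> ring

lemma walk_const {x : V → ℝ} (h : ∀ a b : V, G.Adj a b → x a = x b) {u v : V}
    (w : G.Walk u v) : x u = x v := by
  induction w with
  | nil => rfl
  | cons h' p ih => exact (h _ _ h').trans ih

lemma qf_neg (hconn : G.Connected) {x : V → ℝ} (hnc : ∃ u v, x u ≠ x v) :
    qf G x < 0 := by
  have hadj : ∃ a b, G.Adj a b ∧ x a ≠ x b := by
    by_contra h
    push_neg at h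
    obtain ⟨u, v, huv⟩ := hnc
    obtain ⟨w⟩ := hconn u v
    exact huv (walk_const G (fun a b hab => h a b hab) w)
  obtain ⟨a, b, hab, hne⟩ := hadj
  have hm : 0 < (numEdges G : ℝ) := by
    have : Nonempty G.edgeSet := ⟨⟨s(a, b), hab⟩⟩
    have : 0 < Nat.card G.edgeSet := Nat.card_pos
    exact_mod_cast this
  have hterm : 0 < (if G.Adj a b then (x a - x b) ^ 2 else 0) := by
    rw [if_pos hab]
    have := sub_ne_zero_of_ne hne
    positivity
  have hD : 0 < Df G x := by
    have h1 : (if G.Adj a b then (x a - x b) ^ 2 else 0)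
        ≤ ∑ v, if G.Adj a v then (x a - x v) ^ 2 else 0 :=
      Finset.single_le_sum (f := fun v => if G.Adj a v then (x a - x v) ^ 2 else 0)
        (fun i _ => by show 0 ≤ (if G.Adj a i then (x a - x i) ^ 2 else 0); split_ifs <;> positivity) (Finset.mem_univ b)
    have h2 : (∑ v, if G.Adj a v then (x a - x v) ^ 2 else 0) ≤ Df G x :=
      Finset.single_le_sum (f := fun u => ∑ v, if G.Adj u v then (x u - x v) ^ 2 else 0)
        (fun u _ => Finset.sum_nonneg fun v _ => by split_ifs <;> positivity)
        (Finset.mem_univ a)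
    linarith
  rw [qf_eq, neg_div]
  have : 0 < Df G x / (4 * (numEdges G : ℝ)) := div_pos hD (by linarith)
  linarith

lemma pf_smul (c : ℝ) (x : V → ℝ) : pf G (fun v => c * x v) = c ^ 2 * pf G x := by
  rw [pf, pf, Finset.mul_sum]
  refine Finset.sum_congr rfl fun u _ => ?_
  rw [Finset.mul_sum]
  exact Finset.sum_congr rfl fun v _ => by ring

lemma Sq_smul (c : ℝ) (x : V → ℝ) : Sq (fun v => c * x v) = c ^ 2 * Sq x := by
  rw [Sq, Sq, Finset.mul_sum]
  exact Finset.sum_congr rfl fun v _ => by ring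

/-- The set defining `lambdaTwo`. -/
def R2 : Set ℝ := {r : ℝ | ∃ x : V → ℝ, x ≠ 0 ∧ (∑ v, x v) = 0 ∧
    r = (∑ u, ∑ v, x u * popMat G u v * x v) / (∑ v, (x v) ^ 2)}

lemma lambdaTwo_eq : lambdaTwo G = sSup (R2 G) := rfl

lemma mem_R2_le_one : ∀ r ∈ R2 G, r ≤ 1 := by
  rintro r ⟨x, hx, hsum, rfl⟩
  show pf G x / Sq x ≤ 1
  rw [div_le_one (Sq_pos hx), pf_eq]
  linarith [qf_nonpos G x]

lemma bddAbove_R2 : BddAbove (R2 G) := ⟨1, fun r hr => mem_R2_le_one G r hr⟩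

lemma lambdaTwo_le_one : lambdaTwo G ≤ 1 :=
  Real.sSup_le (mem_R2_le_one G) zero_le_one

lemma rayleigh_le {x : V → ℝ} (hx : x ≠ 0) (hsum : (∑ v, x v) = 0) :
    pf G x / Sq x ≤ lambdaTwo G :=
  le_csSup (bddAbove_R2 G) ⟨x, hx, hsum, rfl⟩

lemma lambdaTwo_lt_one (hconn : G.Connected) : lambdaTwo G < 1 := by
  by_cases hne : (R2 G).Nonempty
  swap
  · rw [lambdaTwo_eq, Set.not_nonempty_iff_eq_empty.mp hne, Real.sSup_empty]
    norm_num
  set K : Set (V → ℝ) := {x | (∑ v, x v) = 0 ∧ (∑ v, (x v) ^ 2) = 1} with hK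
  have hnorm : ∀ x : V → ℝ, x ≠ 0 → (∑ v, x v) = 0 →
      ∃ y ∈ K, pf G y = pf G x / Sq x := by
    intro x hx hsum
    have hs : 0 < Sq x := Sq_pos hx
    set s : ℝ := Real.sqrt (Sq x) with hsdef
    have hs0 : 0 < s := Real.sqrt_pos.mpr hs
    have hss : s ^ 2 = Sq x := Real.sq_sqrt hs.le
    refine ⟨fun v => s⁻¹ * x v, ⟨?_, ?_⟩, ?_⟩
    · rw [← Finset.mul_sum, hsum, mul_zero]
    · have : Sq (fun v => s⁻¹ * x v) = s⁻¹ ^ 2 * Sq x := Sq_smul s⁻¹ x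
      rw [show (∑ v, (s⁻¹ * x v) ^ 2) = Sq (fun v => s⁻¹ * x v) from rfl, this,
        inv_pow, hss, inv_mul_cancel₀ hs.ne']
    · rw [pf_smul, inv_pow, hss, inv_mul_eq_div]
  have hKne : K.Nonempty := by
    obtain ⟨r, x, hx, hsum, rfl⟩ := hne
    obtain ⟨y, hy, -⟩ := hnorm x hx hsum
    exact ⟨y, hy⟩
  have hKcl : IsClosed K := by
    have : K = {x : V → ℝ | (∑ v, x v) = 0} ∩ {x | (∑ v, (x v) ^ 2) = 1} := rfl
    rw [this]
    exact (isClosed_eq (continuous_finset_sum _ fun v _ => continuous_apply v)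
        continuous_const).inter
      (isClosed_eq (continuous_finset_sum _ fun v _ => (continuous_apply v).pow 2)
        continuous_const)
  have hKb : Bornology.IsBounded K := by
    apply (Metric.isBounded_closedBall (x := (0 : V → ℝ)) (r := 1)).subset
    intro x hx
    rw [Metric.mem_closedBall, dist_zero_right]
    refine (pi_norm_le_iff_of_nonneg zero_le_one).mpr fun v => ?_
    rw [Real.norm_eq_abs]
    have h1 : (x v) ^ 2 ≤ 1 := by
      rw [← hx.2]
      exact Finset.single_le_sum (fun i _ => sq_nonneg (x i)) (Finset.mem_univ v)
    nlinarith [abs_nonneg (x v), sq_abs (x v)]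
  have hKc : IsCompact K := Metric.isCompact_of_isClosed_isBounded hKcl hKb
  have hcont : Continuous (pf G) := by
    apply continuous_finset_sum _ fun u _ => continuous_finset_sum _ fun v _ => ?_
    exact ((continuous_apply u).mul continuous_const).mul (continuous_apply v)
  obtain ⟨z, hzK, hzmax⟩ := hKc.exists_isMaxOn hKne hcont.continuousOn
  have hle : lambdaTwo G ≤ pf G z := by
    rw [lambdaTwo_eq]
    apply csSup_le hne
    rintro r ⟨x, hx, hsum, rfl⟩
    obtain ⟨y, hy, hpy⟩ := hnorm x hx hsum
    calc (∑ u, ∑ v, x u * popMat G u v * x v) / (∑ v, (x v) ^ 2)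
        = pf G y := hpy.symm
      _ ≤ pf G z := hzmax hy
  have hlt : pf G z < 1 := by
    have hz1 : Sq z = 1 := hzK.2
    have hznc : ∃ u v, z u ≠ z v := by
      by_contra h
      push_neg at h
      have hVne : Nonempty V := by
        by_contra hV
        have : IsEmpty V := not_nonempty_iff.mp hV
        have := hzK.2
        simp [Finset.univ_eq_empty] at this
      obtain ⟨v0⟩ := hVne
      have hz0 : z v0 = 0 := by
        have hsum := hzK.1
        have : (∑ v, z v) = (Fintype.card V : ℝ) * z v0 := by
          rw [Finset.sum_congr rfl fun v _ => h v v0, Finset.sum_const,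
            Finset.card_univ, nsmul_eq_mul]
        rw [this] at hsum
        have hcard : 0 < (Fintype.card V : ℝ) := by
          exact_mod_cast Fintype.card_pos_iff.mpr ⟨v0⟩
        exact (mul_eq_zero.mp hsum).resolve_left hcard.ne'
      have : Sq z = 0 := by
        rw [Sq]
        apply Finset.sum_eq_zero
        intro v _
        rw [h v v0, hz0]; ring
      rw [hz1] at this; norm_num at this
    have := qf_neg G hconn hznc
    rw [pf_eq, hz1]
    linarith
  linarith

lemma key_bound (S : Finset V) (hS : S.Nonempty) {z : V → ℝ} (hz : z ≠ 0)
    (hzS : ∀ v ∈ S, z v = 0) :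
    qf G z ≤ (lambdaTwo G - 1) * ((S.card : ℝ) / (Fintype.card V : ℝ) * Sq z) := by
  haveI hVne : Nonempty V := ⟨hS.choose⟩
  set n : ℝ := (Fintype.card V : ℝ) with hn
  have hnpos : 0 < n := by rw [hn]; exact_mod_cast Fintype.card_pos
  set c : ℝ := (∑ v, z v) / n with hc
  set y : V → ℝ := fun v => z v - c with hy
  have hsz : (∑ v, z v) = n * c := by
    rw [hc]; field_simp
  have hysum : (∑ v, y v) = 0 := by
    rw [hy]
    simp only
    rw [Finset.sum_sub_distrib, Finset.sum_const, Finset.card_univ, nsmul_eq_mul, hsz, hn]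
    ring
  have hyne : y ≠ 0 := by
    intro h
    have hzc : ∀ v, z v = c := fun v => by
      have := congrFun h v
      simpa [hy, sub_eq_zero] using this
    obtain ⟨v0, hv0⟩ := hS
    have hc0 : c = 0 := (hzS v0 hv0) ▸ (hzc v0).symm
    exact hz (funext fun v => by simp [hzc v, hc0])
  have hq : qf G z = qf G y := (qf_sub_const G z c).symm
  have h1 : pf G y / Sq y ≤ lambdaTwo G := rayleigh_le G hyne hysum
  have hSqy_pos : 0 < Sq y := Sq_pos hyne
  have h2 : qf G y ≤ (lambdaTwo G - 1) * Sq y := by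
    have := (div_le_iff₀ hSqy_pos).mp h1
    have hpf := pf_eq G y
    nlinarith
  have hSqy : Sq y = Sq z - n * c ^ 2 := by
    have : ∀ v, (y v) ^ 2 = (z v) ^ 2 - 2 * c * z v + c ^ 2 := fun v => by
      rw [hy]; ring
    rw [Sq, Finset.sum_congr rfl fun v _ => this v]
    rw [Finset.sum_add_distrib, Finset.sum_sub_distrib, ← Finset.mul_sum, hsz,
      Finset.sum_const, Finset.card_univ, nsmul_eq_mul, ← hn]
    rw [Sq]; ring
  have hCS : (∑ v, z v) ^ 2 ≤ (n - (S.card : ℝ)) * Sq z := by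
    have hsub : (∑ v, z v) = ∑ v ∈ Sᶜ, z v := by
      refine (Finset.sum_subset (Finset.subset_univ _) fun v _ hv => ?_).symm
      exact hzS v (by simpa using hv)
    have hcs := Finset.sum_mul_sq_le_sq_mul_sq Sᶜ (fun _ => (1 : ℝ)) z
    simp only [one_mul, one_pow] at hcs
    have hcard : (∑ _v ∈ (Sᶜ : Finset V), (1 : ℝ)) = n - (S.card : ℝ) := by
      rw [Finset.sum_const, nsmul_eq_mul, mul_one, Finset.card_compl, hn]
      rw [Nat.cast_sub (Finset.card_le_univ S)]
    have hle : (∑ v ∈ (Sᶜ : Finset V), (z v) ^ 2) ≤ Sq z := by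
      apply Finset.sum_le_sum_of_subset_of_nonneg (Finset.subset_univ _)
      intro v _ _; exact sq_nonneg _
    rw [hsub]
    calc (∑ v ∈ (Sᶜ : Finset V), z v) ^ 2
        ≤ (∑ _v ∈ (Sᶜ : Finset V), (1 : ℝ)) * ∑ v ∈ (Sᶜ : Finset V), (z v) ^ 2 := hcs
      _ ≤ (n - (S.card : ℝ)) * Sq z := by
          rw [hcard]
          apply mul_le_mul_of_nonneg_left hle
          have : (S.card : ℝ) ≤ n := by
            rw [hn]; exact_mod_cast Finset.card_le_univ S
          linarith
  have hnc : n * c ^ 2 ≤ (n - (S.card : ℝ)) * Sq z / n := by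
    have : n * c ^ 2 = (∑ v, z v) ^ 2 / n := by
      rw [hc]; field_simp
    rw [this]
    exact div_le_div_of_nonneg_right hCS hnpos.le
  have hSqy_ge : (S.card : ℝ) / n * Sq z ≤ Sq y := by
    have hid : (S.card : ℝ) / n * Sq z = Sq z - (n - (S.card : ℝ)) * Sq z / n := by
      field_simp; ring
    rw [hid, hSqy]
    linarith
  have hl1 : lambdaTwo G - 1 ≤ 0 := by linarith [lambdaTwo_le_one G]
  calc qf G z = qf G y := hq
    _ ≤ (lambdaTwo G - 1) * Sq y := h2
    _ ≤ (lambdaTwo G - 1) * ((S.card : ℝ) / n * Sq z) :=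
        mul_le_mul_of_nonpos_left hSqy_ge hl1

end Stmt11Aux

open PP in
/-- quasistationary mean exit time bound: if the subgraph induced by
`V∖S` is connected, then `−λ(Q[V∖S]) ≥ |S|/(n·τ_rel)`. -/
theorem stmt11 (V : Type) [Fintype V] [DecidableEq V] (G : SimpleGraph V)
    [DecidableRel G.Adj] (hconn : G.Connected)
    (S : Finset V) (hS : S.Nonempty) (hSc : (Sᶜ : Finset V).Nonempty)
    (hind : (G.induce ((Sᶜ : Finset V) : Set V)).Connected) :
    1 / -maxEig (subQ G Sᶜ) ≤ tauRel G * (Fintype.card V : ℝ) / (S.card : ℝ) ∧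
      (S.card : ℝ) / ((Fintype.card V : ℝ) * tauRel G) ≤ -maxEig (subQ G Sᶜ) := by
  classical
  open Stmt11Aux in
  set n : ℝ := (Fintype.card V : ℝ) with hn
  set k : ℝ := (S.card : ℝ) with hk
  have hnpos : 0 < n := by
    haveI : Nonempty V := ⟨hS.choose⟩
    rw [hn]
    exact_mod_cast Fintype.card_pos
  have hkpos : 0 < k := by rw [hk]; exact_mod_cast Finset.card_pos.mpr hS
  set t : ℝ := 1 - lambdaTwo G with ht
  have htpos : 0 < t := by
    have := lambdaTwo_lt_one G hconn
    simp only [ht]; linarith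
  set b : ℝ := t * k / n with hb
  have hbpos : 0 < b := by positivity
  have hne : Nonempty {v // v ∈ (Sᶜ : Finset V)} := ⟨⟨hSc.choose, hSc.choose_spec⟩⟩
  have hmu : maxEig (subQ G Sᶜ) ≤ -b := by
    rw [maxEig]
    apply csSup_le
    · refine ⟨_, (fun _ => (1 : ℝ)), fun h => one_ne_zero (congrFun h hne.some), rfl⟩
    rintro r ⟨x, hx, rfl⟩
    set z : V → ℝ := fun v => if h : v ∈ (Sᶜ : Finset V) then x ⟨v, h⟩ else 0 with hzdef
    have hxz : ∀ i : {v // v ∈ (Sᶜ : Finset V)}, x i = z i.1 := fun i => by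
      simp only [hzdef]
      rw [dif_pos i.2]
    have hzS : ∀ v ∈ S, z v = 0 := fun v hv => by
      simp only [hzdef]
      rw [dif_neg (by simp [Finset.mem_compl, hv])]
    have hzout : ∀ v : V, v ∉ (Sᶜ : Finset V) → z v = 0 := fun v hv => by
      simp only [hzdef]
      rw [dif_neg hv]
    have hz0 : z ≠ 0 := by
      intro h
      apply hx
      funext i
      rw [hxz i]
      exact congrFun h i.1
    have hden : (∑ i, (x i) ^ 2) = Sq z := by
      rw [Finset.sum_congr rfl fun i _ => by rw [hxz i]]
      rw [Finset.sum_coe_sort (Sᶜ : Finset V) (fun v => (z v) ^ 2)]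
      refine Finset.sum_subset (Finset.subset_univ _) fun v _ hv => ?_
      rw [hzout v hv]; ring
    have hnum : (∑ i, ∑ j, x i * subQ G Sᶜ i j * x j) = qf G z := by
      have hsub : ∀ (i j : {v // v ∈ (Sᶜ : Finset V)}),
          x i * subQ G Sᶜ i j * x j = z i.1 * popQ G i.1 j.1 * z j.1 := by
        intro i j
        rw [hxz i, hxz j]
        rfl
      rw [Finset.sum_congr rfl fun i _ => Finset.sum_congr rfl fun j _ => hsub i j]
      have hinner : ∀ u : V,
          (∑ j : {v // v ∈ (Sᶜ : Finset V)}, z u * popQ G u j.1 * z j.1)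
            = ∑ v, z u * popQ G u v * z v := by
        intro u
        rw [Finset.sum_coe_sort (Sᶜ : Finset V) (fun v => z u * popQ G u v * z v)]
        refine Finset.sum_subset (Finset.subset_univ _) fun v _ hv => ?_
        rw [hzout v hv]; ring
      rw [Finset.sum_congr rfl fun i _ => hinner i.1]
      rw [Finset.sum_coe_sort (Sᶜ : Finset V)
        (fun u => ∑ v, z u * popQ G u v * z v)]
      refine Finset.sum_subset (Finset.subset_univ _) fun u _ hu => ?_
      apply Finset.sum_eq_zero
      intro v _
      rw [hzout u hu]; ring
    rw [hnum, hden]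
    have hkey := key_bound G S hS hz0 hzS
    have hSqz : 0 < Sq z := Sq_pos hz0
    rw [div_le_iff₀ hSqz]
    calc qf G z ≤ (lambdaTwo G - 1) * (k / n * Sq z) := hkey
      _ = -b * Sq z := by rw [hb, ht]; ring
  have hmu' : b ≤ -maxEig (subQ G Sᶜ) := by linarith
  have hmupos : 0 < -maxEig (subQ G Sᶜ) := lt_of_lt_of_le hbpos hmu'
  have htau : tauRel G = 1 / t := rfl
  constructor
  · have h1 : 1 / -maxEig (subQ G Sᶜ) ≤ 1 / b := one_div_le_one_div_of_le hbpos hmu'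
    have h2 : 1 / b = tauRel G * n / k := by
      rw [htau, hb]
      rw [one_div_div]
      field_simp
    rw [h2] at h1
    exact h1
  · have h2 : k / (n * tauRel G) = b := by
      rw [htau, hb]
      field_simp
    rw [h2]
    exact hmu'
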